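/- arXiv:0709.4332 — 2 statements merged into one kernel-verified Lean document; each statement's English description precedes it below -/
import Mathlib

section
/- Let ε > 0 and let x = (x₁, x₂) ∈ Ω_ε. Then there exists φ ∈ BMO_ε((0,1]) with ∫₀¹ φ = x₁, ∫₀¹ φ² = x₂, and ∫₀¹ e^φ = B⁻_ε(x). In particular the infimum of ⟨e^φ⟩_I over φ ∈ BMO_ε(I) with ⟨φ⟩_I = x₁, ⟨φ²⟩_I = x₂ is at most B⁻_ε(x). -/
/-! The extremal function is a truncated logarithm. With `s = √(ε² + x₁² - x₂) ∈ [0, ε]`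
and `a = 1 - s / ε`, take `φ t = x₁ + ε - s + ε log (min t a / a)`: it is `ε log t` plus a
constant on `(0, a]` and constant on `[a, 1]`. For `c < a` the mean oscillation of
`log ∘ min · a` over `[c, d]` is
`1 - (c d (log m - log c)² + 2 c (d - m) (log m - log c) + (d - m)²) / (d - c)²`
with `m = min d a`, so at most `1`, with equality on the intervals `[0, d]`, `d ≤ a`.
The constants are fitted to the first two moments, and then
`∫ e^φ = e^(x₁ - s + ε) (a / (1 + ε) + 1 - a) = B⁻_ε(x)`.
When `s = ε` (so `x₂ = x₁²`) the constant `x₁` does it.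
-/

open MeasureTheory Real

/-- The average of `φ` over the interval with endpoints `a`, `b`. -/
noncomputable def avg (φ : ℝ → ℝ) (a b : ℝ) : ℝ := (∫ t in a..b, φ t) / (b - a)

/-- `φ ∈ BMO_ε([a,b])`: `φ` and `φ²` are integrable on `[a,b]` and the mean
oscillation `⟨φ²⟩_J − ⟨φ⟩_J²` is at most `ε²` on every nondegenerate
subinterval `J = [c,d] ⊆ [a,b]`. -/
def BMOe (ε a b : ℝ) (φ : ℝ → ℝ) : Prop :=
  IntervalIntegrable φ volume a b ∧
  IntervalIntegrable (fun t => (φ t) ^ 2) volume a b ∧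
  ∀ c d : ℝ, a ≤ c → c < d → d ≤ b →
    avg (fun t => (φ t) ^ 2) c d - (avg φ c d) ^ 2 ≤ ε ^ 2
/-- The parabolic strip `Ω_ε = {x : x₁² ≤ x₂ ≤ x₁² + ε²}`. -/
def Omega (ε : ℝ) : Set (ℝ × ℝ) := {x | x.1 ^ 2 ≤ x.2 ∧ x.2 ≤ x.1 ^ 2 + ε ^ 2}

/-- The upper Bellman function `B⁺_δ`. -/
noncomputable def Bp (δ : ℝ) (x : ℝ × ℝ) : ℝ :=
  (1 - Real.sqrt (δ ^ 2 + x.1 ^ 2 - x.2)) / (1 - δ) *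
    Real.exp (x.1 + Real.sqrt (δ ^ 2 + x.1 ^ 2 - x.2) - δ)

/-- The lower Bellman function `B⁻_δ`. -/
noncomputable def Bm (δ : ℝ) (x : ℝ × ℝ) : ℝ :=
  (1 + Real.sqrt (δ ^ 2 + x.1 ^ 2 - x.2)) / (1 + δ) *
    Real.exp (x.1 - Real.sqrt (δ ^ 2 + x.1 ^ 2 - x.2) + δ)

open Set intervalIntegral

lemma continuousOn_mul_log_sq : ContinuousOn (fun t : ℝ => t * log t ^ 2) (Ici 0) := by
  have h : Continuous fun t : ℝ => 4 * (√t * log √t) ^ 2 :=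
    continuous_const.mul ((continuous_mul_log.comp continuous_sqrt).pow 2)
  refine h.continuousOn.congr fun t (ht : 0 ≤ t) => ?_
  dsimp only
  rw [log_sqrt ht, mul_pow, sq_sqrt ht]
  ring

lemma hasDerivAt_log_sq_primitive {t : ℝ} (ht : t ≠ 0) :
    HasDerivAt (fun t => t * log t ^ 2 - 2 * (t * log t) + 2 * t) (log t ^ 2) t := by
  have h := (((hasDerivAt_id t).mul ((hasDerivAt_log ht).pow 2)).sub
    ((hasDerivAt_mul_log ht).const_mul 2)).add ((hasDerivAt_id t).const_mul 2)
  refine h.congr_deriv ?_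
  simp only [Pi.pow_apply, id]
  field_simp
  ring

lemma continuousOn_log_sq_primitive :
    ContinuousOn (fun t => t * log t ^ 2 - 2 * (t * log t) + 2 * t) (Ici 0) :=
  (continuousOn_mul_log_sq.sub (continuousOn_const.mul continuous_mul_log.continuousOn)).add
    (continuousOn_const.mul continuousOn_id)

lemma intervalIntegrable_log_sq {a b : ℝ} :
    IntervalIntegrable (fun t => log t ^ 2) volume a b := by
  refine intervalIntegrable_of_even (fun _ => by rw [log_neg_eq_log]) fun x hx => ?_
  refine intervalIntegrable_deriv_of_nonneg
    (continuousOn_log_sq_primitive.mono ?_) (fun _ ht => hasDerivAt_log_sq_primitive ?_)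
    (fun _ _ => sq_nonneg _)
  · rw [uIcc_of_le hx.le]; exact Icc_subset_Ici_self
  · rw [min_eq_left hx.le] at ht; exact ht.1.ne'

lemma integral_log_sq {c d : ℝ} (hc : 0 ≤ c) (hcd : c ≤ d) :
    ∫ t in c..d, log t ^ 2 =
      (d * log d ^ 2 - 2 * (d * log d) + 2 * d) - (c * log c ^ 2 - 2 * (c * log c) + 2 * c) :=
  integral_eq_sub_of_hasDerivAt_of_le hcd
    (continuousOn_log_sq_primitive.mono fun _ ht => hc.trans ht.1)
    (fun _ ht => hasDerivAt_log_sq_primitive (hc.trans_lt ht.1).ne') intervalIntegrable_log_sq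

section ComposeMin

variable {f : ℝ → ℝ} {a c d : ℝ}

lemma eqOn_comp_min_left (hca : c ≤ a) : EqOn (fun t => f (min t a)) f (uIcc c (min d a)) :=
  fun _ ht => congrArg f (min_eq_left (ht.2.trans (max_le hca (min_le_right _ _))))

lemma eqOn_comp_min_right :
    EqOn (fun t => f (min t a)) (fun _ => f (min d a)) (uIcc (min d a) d) := by
  intro t ht
  rw [uIcc_of_le (min_le_left _ _)] at ht
  refine congrArg f ?_
  rcases le_total d a with hda | had
  · rw [min_eq_left hda] at ht ⊢
    rw [le_antisymm ht.2 ht.1, min_eq_left hda]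
  · rw [min_eq_right had] at ht ⊢
    exact min_eq_right ht.1

lemma intervalIntegrable_comp_min (hca : c ≤ a) (hf : IntervalIntegrable f volume c (min d a)) :
    IntervalIntegrable (fun t => f (min t a)) volume c d :=
  ((intervalIntegrable_congr ((eqOn_comp_min_left hca).mono Ioc_subset_Icc_self)).mpr hf).trans
    ((intervalIntegrable_congr (eqOn_comp_min_right.mono Ioc_subset_Icc_self)).mpr
      intervalIntegrable_const)

lemma integral_comp_min (hca : c ≤ a) (hf : IntervalIntegrable f volume c (min d a)) :
    ∫ t in c..d, f (min t a) = (∫ t in c..min d a, f t) + (d - min d a) * f (min d a) := by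
  rw [← integral_add_adjacent_intervals
      ((intervalIntegrable_congr ((eqOn_comp_min_left hca).mono Ioc_subset_Icc_self)).mpr hf)
      ((intervalIntegrable_congr (eqOn_comp_min_right.mono Ioc_subset_Icc_self)).mpr
        intervalIntegrable_const),
    integral_congr (eqOn_comp_min_left hca), integral_congr eqOn_comp_min_right,
    intervalIntegral.integral_const, smul_eq_mul]

end ComposeMin

lemma avg_sq_sub_sq_avg_le {φ : ℝ → ℝ} {c d K : ℝ} (hcd : c < d)
    (h : (d - c) * (∫ t in c..d, φ t ^ 2) - (∫ t in c..d, φ t) ^ 2 ≤ K * (d - c) ^ 2) :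
    avg (fun t => φ t ^ 2) c d - avg φ c d ^ 2 ≤ K := by
  have hdc : 0 < d - c := sub_pos.mpr hcd
  calc avg (fun t => φ t ^ 2) c d - avg φ c d ^ 2
      = ((d - c) * (∫ t in c..d, φ t ^ 2) - (∫ t in c..d, φ t) ^ 2) / (d - c) ^ 2 := by
        unfold avg; field_simp
    _ ≤ K := (div_le_iff₀ (by positivity)).mpr h

section Affine

variable {ψ : ℝ → ℝ} {c d : ℝ}

lemma integral_const_add_mul (K k : ℝ) (hψ : IntervalIntegrable ψ volume c d) :
    ∫ t in c..d, (K + k * ψ t) = K * (d - c) + k * ∫ t in c..d, ψ t := by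
  rw [integral_add intervalIntegrable_const (hψ.const_mul k), intervalIntegral.integral_const,
    intervalIntegral.integral_const_mul, smul_eq_mul, mul_comm]

lemma integral_const_add_mul_sq (K k : ℝ) (hψ : IntervalIntegrable ψ volume c d)
    (hψ2 : IntervalIntegrable (fun t => ψ t ^ 2) volume c d) :
    ∫ t in c..d, (K + k * ψ t) ^ 2 =
      K ^ 2 * (d - c) + 2 * K * k * (∫ t in c..d, ψ t) + k ^ 2 * ∫ t in c..d, ψ t ^ 2 := by
  calc ∫ t in c..d, (K + k * ψ t) ^ 2
      = ∫ t in c..d, ((K ^ 2 + 2 * K * k * ψ t) + k ^ 2 * ψ t ^ 2) :=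
        integral_congr fun t _ => by ring
    _ = _ := by
      rw [integral_add (intervalIntegrable_const.add (hψ.const_mul _)) (hψ2.const_mul _),
        integral_const_add_mul _ _ hψ, intervalIntegral.integral_const_mul]

lemma BMOe.const_add_mul {ε a b : ℝ} (h : BMOe ε a b ψ) (K k : ℝ) :
    BMOe (|k| * ε) a b (fun t => K + k * ψ t) := by
  obtain ⟨hψ, hψ2, hosc⟩ := h
  refine ⟨intervalIntegrable_const.add (hψ.const_mul k),
    (intervalIntegrable_congr (g := fun t => (K ^ 2 + 2 * K * k * ψ t) + k ^ 2 * ψ t ^ 2)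
      fun t _ => by ring).mpr ((intervalIntegrable_const.add (hψ.const_mul _)).add
        (hψ2.const_mul _)),
    fun c d hac hcd hdb => ?_⟩
  have hsub : uIcc c d ⊆ uIcc a b := by
    rw [uIcc_of_le hcd.le, uIcc_of_le (hac.trans (hcd.le.trans hdb))]
    exact Icc_subset_Icc hac hdb
  have hψ' := hψ.mono_set hsub
  have hψ2' := hψ2.mono_set hsub
  have hdc : d - c ≠ 0 := (sub_pos.mpr hcd).ne'
  have h := hosc c d hac hcd hdb
  unfold avg at h ⊢
  rw [integral_const_add_mul_sq K k hψ' hψ2', integral_const_add_mul K k hψ']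
  calc _ = k ^ 2 *
        ((∫ t in c..d, ψ t ^ 2) / (d - c) - ((∫ t in c..d, ψ t) / (d - c)) ^ 2) := by
        field_simp
        ring
    _ ≤ k ^ 2 * ε ^ 2 := by gcongr
    _ = (|k| * ε) ^ 2 := by rw [mul_pow, sq_abs]

end Affine

lemma bmoe_log_min {a : ℝ} (ha : 0 < a) (b : ℝ) : BMOe 1 0 b (fun t => log (min t a)) := by
  refine ⟨intervalIntegrable_comp_min ha.le intervalIntegrable_log',
    intervalIntegrable_comp_min (f := fun t => log t ^ 2) ha.le intervalIntegrable_log_sq,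
    fun c d hc hcd _ => avg_sq_sub_sq_avg_le hcd ?_⟩
  rcases le_or_gt a c with hac | hca
  · have hconst : EqOn (fun t => log (min t a)) (fun _ => log a) (uIcc c d) := fun t ht => by
      rw [uIcc_of_le hcd.le] at ht
      simp only [min_eq_right (hac.trans ht.1)]
    rw [integral_congr hconst,
      integral_congr (g := fun _ => log a ^ 2) fun t ht => congrArg (· ^ 2) (hconst ht),
      intervalIntegral.integral_const, intervalIntegral.integral_const, smul_eq_mul, smul_eq_mul]
    nlinarith [sq_nonneg (d - c)]
  · set m := min d a
    have hcm : c ≤ m := le_min hcd.le hca.le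
    have hmd : m ≤ d := min_le_left d a
    have hlog : 0 ≤ c * (log m - log c) := by
      rcases hc.eq_or_lt with rfl | hc0
      · simp
      · exact mul_nonneg hc (sub_nonneg.mpr (log_le_log hc0 hcm))
    rw [integral_comp_min hca.le intervalIntegrable_log',
      integral_comp_min (f := fun t => log t ^ 2) hca.le intervalIntegrable_log_sq,
      integral_log, integral_log_sq hc hcm]
    linear_combination mul_nonneg (mul_nonneg hc (hc.trans hcd.le)) (sq_nonneg (log m - log c)) +
      2 * mul_nonneg (sub_nonneg.mpr hmd) hlog + sq_nonneg (d - m)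

lemma integral_log_min {a b : ℝ} (ha : 0 ≤ a) (hab : a ≤ b) :
    ∫ t in (0:ℝ)..b, log (min t a) = b * log a - a := by
  rw [integral_comp_min ha intervalIntegrable_log', min_eq_right hab, integral_log]
  ring

lemma integral_log_min_sq {a b : ℝ} (ha : 0 ≤ a) (hab : a ≤ b) :
    ∫ t in (0:ℝ)..b, log (min t a) ^ 2 = b * log a ^ 2 - 2 * a * log a + 2 * a := by
  rw [integral_comp_min (f := fun t => log t ^ 2) ha intervalIntegrable_log_sq, min_eq_right hab,
    integral_log_sq le_rfl ha]
  ring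

section ExpLog

variable {K k a : ℝ}

lemma eqOn_exp_const_add_mul_log (ha : 0 ≤ a) :
    EqOn (fun t => exp (K + k * log t)) (fun t => exp K * t ^ k) (uIoc 0 a) := fun t ht => by
  rw [uIoc_of_le ha] at ht
  simp only [exp_add, rpow_def_of_pos ht.1, mul_comm k]

lemma intervalIntegrable_exp_const_add_mul_log (hk : -1 < k) (ha : 0 ≤ a) :
    IntervalIntegrable (fun t => exp (K + k * log t)) volume 0 a :=
  (intervalIntegrable_congr (eqOn_exp_const_add_mul_log ha)).mpr
    ((intervalIntegral.intervalIntegrable_rpow' hk).const_mul _)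

lemma integral_exp_const_add_mul_log (hk : -1 < k) (ha : 0 ≤ a) :
    ∫ t in (0:ℝ)..a, exp (K + k * log t) = exp K * (a ^ (k + 1) / (k + 1)) := by
  rw [integral_congr_ae (ae_of_all _ (eqOn_exp_const_add_mul_log ha)),
    intervalIntegral.integral_const_mul, integral_rpow (Or.inl hk),
    zero_rpow (by linarith), sub_zero]

lemma integral_exp_const_add_mul_log_min (hk : -1 < k) (ha : 0 < a) {b : ℝ} (hab : a ≤ b) :
    ∫ t in (0:ℝ)..b, exp (K + k * log (min t a)) =
      exp (K + k * log a) * (a / (k + 1) + (b - a)) := by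
  rw [integral_comp_min (f := fun t => exp (K + k * log t)) ha.le
      (by rw [min_eq_right hab]; exact intervalIntegrable_exp_const_add_mul_log hk ha.le),
    min_eq_right hab, integral_exp_const_add_mul_log hk ha.le, rpow_add ha, rpow_one,
    rpow_def_of_pos ha, mul_comm (log a) k, exp_add K]
  ring

end ExpLog

lemma exists_bmoe_extremal {ε s m : ℝ} (hε : 0 < ε) (hs : 0 ≤ s) (hsε : s ≤ ε) :
    ∃ φ : ℝ → ℝ, BMOe ε 0 1 φ ∧
      (∫ t in (0:ℝ)..1, φ t) = m ∧
      (∫ t in (0:ℝ)..1, φ t ^ 2) = m ^ 2 + ε ^ 2 - s ^ 2 ∧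
      IntervalIntegrable (fun t => exp (φ t)) volume 0 1 ∧
      (∫ t in (0:ℝ)..1, exp (φ t)) = (1 + s) / (1 + ε) * exp (m - s + ε) := by
  rcases hsε.lt_or_eq with hsε | rfl
  swap
  · refine ⟨fun _ => m, ⟨intervalIntegrable_const, intervalIntegrable_const,
      fun c d _ hcd _ => avg_sq_sub_sq_avg_le hcd ?_⟩, ?_, ?_, intervalIntegrable_const, ?_⟩
    · simp only [intervalIntegral.integral_const, smul_eq_mul]
      nlinarith [sq_nonneg s, sq_nonneg (d - c)]
    · simp
    · simp
    · rw [div_self (by linarith), sub_add_cancel]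
      simp
  obtain ⟨a, hεa⟩ : ∃ a, ε * a = ε - s := ⟨1 - s / ε, by field_simp⟩
  have ha0 : 0 < a := by nlinarith
  have ha1 : a ≤ 1 := by nlinarith
  set K := m + ε - s - ε * log a
  have hψ := bmoe_log_min ha0 1
  refine ⟨fun t => K + ε * log (min t a), by simpa [abs_of_pos hε] using hψ.const_add_mul K ε,
    ?_, ?_, ?_, ?_⟩
  · rw [integral_const_add_mul K ε hψ.1, integral_log_min ha0.le ha1]
    linear_combination -hεa
  · rw [integral_const_add_mul_sq K ε hψ.1 hψ.2.1, integral_log_min ha0.le ha1,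
      integral_log_min_sq ha0.le ha1]
    linear_combination (2 * s - 2 * m) * hεa
  · exact intervalIntegrable_comp_min (f := fun t => exp (K + ε * log t)) ha0.le
      (by rw [min_eq_right ha1]
          exact intervalIntegrable_exp_const_add_mul_log (by linarith) ha0.le)
  · rw [integral_exp_const_add_mul_log_min (by linarith) ha0 ha1,
      show K + ε * log a = m - s + ε by ring]
    field_simp
    linear_combination -(1 + ε) * hεa

/-- For every point of `Ω_ε` (with `ε > 0`) there is an extremal function in
`BMO_ε((0,1])` attaining the value `B⁻_ε(x)`; in particular the Bellman
infimum is at most `B⁻_ε(x)`. -/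
theorem stmt7 (ε : ℝ) (hε0 : 0 < ε) (x : ℝ × ℝ) (hx : x ∈ Omega ε) :
    ∃ φ : ℝ → ℝ, BMOe ε 0 1 φ ∧
      (∫ t in (0:ℝ)..1, φ t) = x.1 ∧
      (∫ t in (0:ℝ)..1, (φ t) ^ 2) = x.2 ∧
      IntervalIntegrable (fun t => Real.exp (φ t)) volume 0 1 ∧
      (∫ t in (0:ℝ)..1, Real.exp (φ t)) = Bm ε x := by
  obtain ⟨hx₁, hx₂⟩ := hx
  have hs_sq : √(ε ^ 2 + x.1 ^ 2 - x.2) ^ 2 = ε ^ 2 + x.1 ^ 2 - x.2 := sq_sqrt (by linarith)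
  have hsε : √(ε ^ 2 + x.1 ^ 2 - x.2) ≤ ε :=
    (sqrt_le_sqrt (by linarith : ε ^ 2 + x.1 ^ 2 - x.2 ≤ ε ^ 2)).trans_eq (sqrt_sq hε0.le)
  obtain ⟨φ, hbmo, h₁, h₂, hexp_int, hexp⟩ :=
    exists_bmoe_extremal (m := x.1) hε0 (sqrt_nonneg _) hsε
  exact ⟨φ, hbmo, h₁, by rw [h₂, hs_sq]; ring, hexp_int, hexp⟩
end

section
/- Let ε > 0 and let I be a nondegenerate bounded interval. Then for every φ ∈ BMO_ε(I), the average ⟨e^φ⟩_I (understood as the lower Lebesgue integral divided by |I|, possibly +∞) satisfies ⟨e^φ⟩_I ≥ B⁻_ε(⟨φ⟩_I, ⟨φ²⟩_I). -/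
open MeasureTheory Real

/-!
For `δ > ε`, `B⁻_δ` is convex along every chord that stays strictly below the upper parabola
`x₂ = x₁² + δ²`. Every subinterval `J` of `I` can be cut at a point where the lengths of the two
pieces are inversely proportional to the roots `√(δ² + x₁² − x₂)` at their Bellman points
`(⟨φ⟩, ⟨φ²⟩)`; the Bellman point of `J` then lies on such a chord between those of the pieces,
so `|J| B⁻_δ(x_J)` is at most the sum of the corresponding quantities for the pieces. Iterating
`n` times, a leaf whose oscillation is at most `η` satisfies
`B⁻_δ(x) ≤ (1 + o_η(1)) e^{⟨φ⟩} ≤ (1 + o_η(1)) ⟨e^φ⟩` by Jensen. The leaves shrink geometrically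
and `φ` is `L²`-close to a uniformly continuous function, so the leaves of larger oscillation have
total length tending to `0` and contribute nothing in the limit, by absolute continuity of the
integral of `e^φ`. Letting `n → ∞`, `η → 0` and finally `δ ↓ ε` gives the estimate.
-/

open Set Filter Topology

/-- The upper boundary of `Ω_δ` is where this vanishes; it is positive strictly below it. -/
def upperGap (δ : ℝ) (x : ℝ × ℝ) : ℝ := δ ^ 2 + x.1 ^ 2 - x.2

noncomputable def bmWeight (δ s : ℝ) : ℝ := (1 + s) / (1 + δ) * exp (δ - s)

theorem Bm_eq_bmWeight_mul (δ : ℝ) (x : ℝ × ℝ) :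
    Bm δ x = bmWeight δ √(upperGap δ x) * exp x.1 := by
  rw [Bm, bmWeight, upperGap, mul_assoc, ← exp_add]
  ring_nf

theorem bmWeight_nonneg {δ s : ℝ} (hδ : 0 ≤ 1 + δ) (hs : 0 ≤ s) : 0 ≤ bmWeight δ s := by
  rw [bmWeight]
  positivity

theorem bmWeight_sqrt_sq {δ : ℝ} (hδ : 0 ≤ δ) : bmWeight δ √(δ ^ 2) = 1 := by
  rw [sqrt_sq hδ, bmWeight, sub_self, exp_zero, div_self (by positivity), one_mul]

theorem antitoneOn_one_add_mul_exp_neg :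
    AntitoneOn (fun s => (1 + s) * exp (-s)) (Ici 0) := by
  intro s hs₀ t _ hst
  have hs : 0 ≤ s := hs₀
  have hexp : exp (-s) = exp (-t) * exp (t - s) := by rw [← exp_add]; ring_nf
  have hle : 1 + t ≤ (1 + s) * (t - s + 1) := by
    nlinarith [mul_nonneg hs (sub_nonneg.2 hst)]
  calc (1 + t) * exp (-t) ≤ (1 + s) * (t - s + 1) * exp (-t) := by gcongr
    _ ≤ (1 + s) * exp (t - s) * exp (-t) := by gcongr; exact add_one_le_exp _
    _ = (1 + s) * exp (-s) := by rw [hexp]; ring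

theorem antitoneOn_bmWeight {δ : ℝ} (hδ : 0 ≤ 1 + δ) : AntitoneOn (bmWeight δ) (Ici 0) := by
  intro s hs t ht hst
  have hw : ∀ r, bmWeight δ r = exp δ / (1 + δ) * ((1 + r) * exp (-r)) := fun r => by
    rw [bmWeight, sub_eq_add_neg, exp_add]; ring
  rw [hw, hw]
  exact mul_le_mul_of_nonneg_left (antitoneOn_one_add_mul_exp_neg hs ht hst) (by positivity)

theorem Bm_le_bmWeight_mul_exp {δ s : ℝ} (hδ : 0 ≤ 1 + δ) {x : ℝ × ℝ} (hs : 0 ≤ s)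
    (hsx : s ≤ √(upperGap δ x)) : Bm δ x ≤ bmWeight δ s * exp x.1 := by
  rw [Bm_eq_bmWeight_mul]
  exact mul_le_mul_of_nonneg_right (antitoneOn_bmWeight hδ hs (hs.trans hsx) hsx) (exp_pos _).le

theorem convexOn_one_add_sqrt_mul_exp {D : Set ℝ} (hD : Convex ℝ D) {x₀ q w₀ w₁ : ℝ}
    (hw : ∀ θ ∈ interior D, 0 < w₀ + w₁ * θ + q ^ 2 * θ ^ 2) :
    ConvexOn ℝ D fun θ => (1 + √(w₀ + w₁ * θ + q ^ 2 * θ ^ 2)) *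
      exp (x₀ + q * θ - √(w₀ + w₁ * θ + q ^ 2 * θ ^ 2)) := by
  set W : ℝ → ℝ := fun θ => w₀ + w₁ * θ + q ^ 2 * θ ^ 2
  set s : ℝ → ℝ := fun θ => √(W θ)
  set E : ℝ → ℝ := fun θ => exp (x₀ + q * θ - s θ)
  have hW : ∀ θ, HasDerivAt W (w₁ + 2 * q ^ 2 * θ) θ := fun θ => by
    have : HasDerivAt W _ θ := (((hasDerivAt_id θ).const_mul w₁).const_add w₀).add
      (((hasDerivAt_id θ).pow 2).const_mul (q ^ 2))
    exact this.congr_deriv (by simp; ring)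
  have hs : ∀ θ ∈ interior D, HasDerivAt s ((w₁ + 2 * q ^ 2 * θ) / (2 * s θ)) θ :=
    fun θ hθ => (hW θ).sqrt (hw θ hθ).ne'
  have hs₀ : ∀ θ ∈ interior D, 0 < s θ := fun θ hθ => sqrt_pos.2 (hw θ hθ)
  have hE : ∀ θ ∈ interior D,
      HasDerivAt E (E θ * (q - (w₁ + 2 * q ^ 2 * θ) / (2 * s θ))) θ := fun θ hθ => by
    have : HasDerivAt E _ θ :=
      ((((hasDerivAt_id θ).const_mul q).const_add x₀).sub (hs θ hθ)).exp
    exact this.congr_deriv (by simp [E])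
  -- `s s' = W' / 2`, hence `f' = E (q (1 + s) - W' / 2)` and `f'' = s E (q - s')²`.
  refine convexOn_of_hasDerivWithinAt2_nonneg
    (f' := fun θ => E θ * (q * (1 + s θ) - (w₁ + 2 * q ^ 2 * θ) / 2))
    (f'' := fun θ => s θ * E θ * (q - (w₁ + 2 * q ^ 2 * θ) / (2 * s θ)) ^ 2) hD
    (Continuous.continuousOn (by fun_prop)) (fun θ hθ => ?_) (fun θ hθ => ?_)
    (fun θ hθ => by have := (hs₀ θ hθ).le; positivity)
  · refine ((((hs θ hθ).const_add 1).mul (hE θ hθ)).congr_deriv ?_).hasDerivWithinAt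
    have := (hs₀ θ hθ).ne'
    field_simp
    ring
  · refine (((hE θ hθ).mul ((((hs θ hθ).const_add 1).const_mul q).sub
      ((((hasDerivAt_id θ).const_mul (2 * q ^ 2)).const_add w₁).div_const 2))).congr_deriv
      ?_).hasDerivWithinAt
    have := (hs₀ θ hθ).ne'
    simp only [Pi.sub_apply, id]
    field_simp
    ring

theorem upperGap_lineMap (δ : ℝ) (u v : ℝ × ℝ) (θ : ℝ) :
    upperGap δ (AffineMap.lineMap u v θ) =
      (1 - θ) * upperGap δ u + θ * upperGap δ v - θ * (1 - θ) * (v.1 - u.1) ^ 2 := by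
  simp only [upperGap, AffineMap.lineMap_apply_module, Prod.fst_add, Prod.snd_add,
    Prod.smul_fst, Prod.smul_snd, smul_eq_mul]
  ring

theorem upperGap_lineMap_pos {δ θ τ : ℝ} {u v : ℝ × ℝ}
    (hu : 0 < upperGap δ u) (hv : 0 < upperGap δ v)
    (hbal : (1 - θ) * √(upperGap δ u) = θ * √(upperGap δ v))
    (hx : 0 < upperGap δ (AffineMap.lineMap u v θ)) (hτ : τ ∈ Ioo (0 : ℝ) 1) :
    0 < upperGap δ (AffineMap.lineMap u v τ) := by
  set p := √(upperGap δ u)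
  set r := √(upperGap δ v)
  have hp : 0 < p := sqrt_pos.2 hu
  have hr : 0 < r := sqrt_pos.2 hv
  have hu2 : upperGap δ u = p ^ 2 := (sq_sqrt hu.le).symm
  have hv2 : upperGap δ v = r ^ 2 := (sq_sqrt hv.le).symm
  have hθ : θ = p / (p + r) := by rw [eq_div_iff (by positivity)]; linarith
  have key : p * r * upperGap δ (AffineMap.lineMap u v τ) =
      p * r * ((1 - τ) * p - τ * r) ^ 2 +
        τ * (1 - τ) * (p + r) ^ 2 * upperGap δ (AffineMap.lineMap u v θ) := by
    rw [upperGap_lineMap, upperGap_lineMap, hu2, hv2, hθ]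
    field_simp
    ring
  have hpos : 0 < p * r * upperGap δ (AffineMap.lineMap u v τ) := by
    rw [key]
    exact add_pos_of_nonneg_of_pos (by positivity)
      (mul_pos (mul_pos (mul_pos hτ.1 (sub_pos.2 hτ.2)) (by positivity)) hx)
  exact pos_of_mul_pos_right hpos (by positivity)

theorem convexOn_Bm_lineMap {δ : ℝ} (hδ : 0 ≤ 1 + δ) {u v : ℝ × ℝ}
    (h : ∀ τ ∈ Ioo (0 : ℝ) 1, 0 < upperGap δ (AffineMap.lineMap u v τ)) :
    ConvexOn ℝ (Icc (0 : ℝ) 1) fun τ => Bm δ (AffineMap.lineMap u v τ) := by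
  set q := v.1 - u.1
  set w₁ := upperGap δ v - upperGap δ u - q ^ 2
  have hW : ∀ τ, upperGap δ (AffineMap.lineMap u v τ) =
      upperGap δ u + w₁ * τ + q ^ 2 * τ ^ 2 := fun τ => by
    rw [upperGap_lineMap]; ring
  have hfst : ∀ τ, (AffineMap.lineMap u v τ).1 = u.1 + q * τ := fun τ => by
    simp only [AffineMap.lineMap_apply_module, Prod.fst_add, Prod.smul_fst, smul_eq_mul]; ring
  have hconv := (convexOn_one_add_sqrt_mul_exp (convex_Icc 0 1) (x₀ := u.1)
    fun τ hτ => hW τ ▸ h τ (by rwa [interior_Icc] at hτ)).smul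
    (c := exp δ / (1 + δ)) (by positivity)
  refine hconv.congr fun τ _ => ?_
  simp only [Bm_eq_bmWeight_mul, hW, hfst, bmWeight, smul_eq_mul, exp_add, exp_sub]
  ring

theorem Bm_lineMap_le {δ θ : ℝ} (hδ : 0 ≤ 1 + δ) {u v : ℝ × ℝ} (hθ : θ ∈ Icc (0 : ℝ) 1)
    (hu : 0 < upperGap δ u) (hv : 0 < upperGap δ v)
    (hbal : (1 - θ) * √(upperGap δ u) = θ * √(upperGap δ v))
    (hx : 0 < upperGap δ (AffineMap.lineMap u v θ)) :
    Bm δ (AffineMap.lineMap u v θ) ≤ (1 - θ) * Bm δ u + θ * Bm δ v := by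
  have := (convexOn_Bm_lineMap hδ fun τ hτ => upperGap_lineMap_pos hu hv hbal hx hτ).2
    (left_mem_Icc.2 zero_le_one) (right_mem_Icc.2 zero_le_one) (sub_nonneg.2 hθ.2) hθ.1
    (by ring)
  simpa using this

section Averages

variable {f φ ψ : ℝ → ℝ} {c d t : ℝ}

theorem sub_mul_avg (f : ℝ → ℝ) (c d : ℝ) : (d - c) * avg f c d = ∫ x in c..d, f x := by
  rcases eq_or_ne d c with rfl | h
  · simp
  · rw [avg, mul_div_cancel₀ _ (sub_ne_zero.2 h)]

theorem avg_eq_add (hf : IntervalIntegrable f volume c d) (ht : t ∈ Icc c d) (hcd : c < d) :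
    avg f c d = (1 - (d - t) / (d - c)) * avg f c t + (d - t) / (d - c) * avg f t d := by
  have ht' : t ∈ uIcc c d := Icc_subset_uIcc ht
  have hsum := intervalIntegral.integral_add_adjacent_intervals
    (hf.mono_set (uIcc_subset_uIcc_left ht')) (hf.mono_set (uIcc_subset_uIcc_right ht'))
  rw [← sub_mul_avg, ← sub_mul_avg, ← sub_mul_avg] at hsum
  rw [one_sub_div (sub_ne_zero.2 hcd.ne'), div_mul_eq_mul_div, div_mul_eq_mul_div, ← add_div,
    eq_div_iff (sub_ne_zero.2 hcd.ne')]
  linear_combination -hsum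

theorem continuousOn_avg_right (hf : IntervalIntegrable f volume c d) :
    ContinuousOn (fun t => avg f c t) (Ioc c d) :=
  ((intervalIntegral.continuousOn_primitive_interval
    ((intervalIntegrable_iff' (by simp)).1 hf)).mono
    (Ioc_subset_Icc_self.trans Icc_subset_uIcc)).div (continuousOn_id.sub continuousOn_const)
    fun _ ht => sub_ne_zero.2 ht.1.ne'

theorem continuousOn_avg_left (hf : IntervalIntegrable f volume c d) :
    ContinuousOn (fun t => avg f t d) (Ico c d) :=
  ((intervalIntegral.continuousOn_primitive_interval_left
    ((intervalIntegrable_iff' (by simp)).1 hf)).mono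
    (Ico_subset_Icc_self.trans Icc_subset_uIcc)).div (continuousOn_const.sub continuousOn_id)
    fun _ ht => sub_ne_zero.2 ht.2.ne'

theorem sub_mul_exp_avg_le (hφ : IntervalIntegrable φ volume c d)
    (he : IntervalIntegrable (fun x => exp (φ x)) volume c d) (hcd : c ≤ d) :
    (d - c) * exp (avg φ c d) ≤ ∫ x in c..d, exp (φ x) := by
  set A := avg φ c d
  have htangent : ∫ x in c..d, (exp A * φ x + exp A * (1 - A)) = (d - c) * exp A := by
    rw [intervalIntegral.integral_add (hφ.const_mul _) intervalIntegrable_const,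
      intervalIntegral.integral_const_mul, intervalIntegral.integral_const, ← sub_mul_avg,
      smul_eq_mul]
    ring
  rw [← htangent]
  refine intervalIntegral.integral_mono_on hcd ((hφ.const_mul _).add intervalIntegrable_const) he
    fun x _ => ?_
  calc exp A * φ x + exp A * (1 - A) = exp A * (φ x - A + 1) := by ring
    _ ≤ exp A * exp (φ x - A) := by gcongr; exact add_one_le_exp _
    _ = exp (φ x) := by rw [← exp_add]; ring_nf

theorem IntervalIntegrable.sub_continuous_sq (hφ : IntervalIntegrable φ volume c d)
    (hφ2 : IntervalIntegrable (fun x => φ x ^ 2) volume c d) (hψ : Continuous ψ) :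
    IntervalIntegrable (fun x => (φ x - ψ x) ^ 2) volume c d := by
  have h := (hφ2.sub ((hφ.mul_continuousOn hψ.continuousOn).const_mul 2)).add
    ((hψ.pow 2).intervalIntegrable c d)
  refine h.congr_ae (Eventually.of_forall fun x => ?_)
  simp only [Pi.pow_apply]
  ring

noncomputable def moments (φ : ℝ → ℝ) (c d : ℝ) : ℝ × ℝ :=
  (avg φ c d, avg (fun x => φ x ^ 2) c d)

noncomputable def meanOsc (φ : ℝ → ℝ) (c d : ℝ) : ℝ :=
  avg (fun x => φ x ^ 2) c d - avg φ c d ^ 2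

theorem upperGap_moments (δ : ℝ) (φ : ℝ → ℝ) (c d : ℝ) :
    upperGap δ (moments φ c d) = δ ^ 2 - meanOsc φ c d := by
  simp only [upperGap, moments, meanOsc]
  ring

theorem moments_eq_lineMap (hφ : IntervalIntegrable φ volume c d)
    (hφ2 : IntervalIntegrable (fun x => φ x ^ 2) volume c d) (ht : t ∈ Icc c d) (hcd : c < d) :
    moments φ c d = AffineMap.lineMap (moments φ c t) (moments φ t d) ((d - t) / (d - c)) := by
  simp only [AffineMap.lineMap_apply_module, moments, Prod.smul_mk, Prod.mk_add_mk, smul_eq_mul,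
    avg_eq_add hφ ht hcd, avg_eq_add hφ2 ht hcd]

theorem integral_sub_sq (hφ : IntervalIntegrable φ volume c d)
    (hφ2 : IntervalIntegrable (fun x => φ x ^ 2) volume c d) (K : ℝ) :
    ∫ x in c..d, (φ x - K) ^ 2 = (d - c) * (meanOsc φ c d + (avg φ c d - K) ^ 2) := by
  have e : (fun x => (φ x - K) ^ 2) = fun x => (φ x ^ 2 - 2 * K * φ x) + K ^ 2 := by
    ext x; ring
  rw [e, intervalIntegral.integral_add (hφ2.sub (hφ.const_mul _)) intervalIntegrable_const,
    intervalIntegral.integral_sub hφ2 (hφ.const_mul _), intervalIntegral.integral_const_mul,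
    intervalIntegral.integral_const, ← sub_mul_avg, ← sub_mul_avg, meanOsc, smul_eq_mul]
  ring

theorem meanOsc_nonneg (hφ : IntervalIntegrable φ volume c d)
    (hφ2 : IntervalIntegrable (fun x => φ x ^ 2) volume c d) (hcd : c < d) :
    0 ≤ meanOsc φ c d := by
  have h := integral_sub_sq hφ hφ2 (avg φ c d)
  rw [sub_self, sq, zero_mul, add_zero] at h
  have := intervalIntegral.integral_nonneg (μ := volume) hcd.le
    fun x _ => sq_nonneg (φ x - avg φ c d)
  exact nonneg_of_mul_nonneg_right (h ▸ this) (sub_pos.2 hcd)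

theorem sub_mul_meanOsc_le (hφ : IntervalIntegrable φ volume c d)
    (hφ2 : IntervalIntegrable (fun x => φ x ^ 2) volume c d) (hcd : c ≤ d) (hψ : Continuous ψ)
    {ω : ℝ} (hω : ∀ x ∈ Icc c d, |ψ x - ψ c| ≤ ω) :
    (d - c) * meanOsc φ c d ≤ 2 * (∫ x in c..d, (φ x - ψ x) ^ 2) + 2 * (d - c) * ω ^ 2 := by
  have hφψ := hφ.sub_continuous_sq hφ2 hψ
  calc (d - c) * meanOsc φ c d ≤ ∫ x in c..d, (φ x - ψ c) ^ 2 := by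
        rw [integral_sub_sq hφ hφ2]
        nlinarith [mul_nonneg (sub_nonneg.2 hcd) (sq_nonneg (avg φ c d - ψ c))]
    _ ≤ ∫ x in c..d, (2 * (φ x - ψ x) ^ 2 + 2 * ω ^ 2) := by
        refine intervalIntegral.integral_mono_on hcd (hφ.sub_continuous_sq hφ2 continuous_const)
          ((hφψ.const_mul 2).add intervalIntegrable_const) fun x hx => ?_
        have hψω : (ψ x - ψ c) ^ 2 ≤ ω ^ 2 := by
          rw [← sq_abs]
          exact pow_le_pow_left₀ (abs_nonneg _) (hω x hx) 2
        nlinarith [sq_nonneg (φ x - 2 * ψ x + ψ c)]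
    _ = 2 * (∫ x in c..d, (φ x - ψ x) ^ 2) + 2 * (d - c) * ω ^ 2 := by
        rw [intervalIntegral.integral_add (hφψ.const_mul 2) intervalIntegrable_const,
          intervalIntegral.integral_const_mul, intervalIntegral.integral_const, smul_eq_mul]
        ring

end Averages

noncomputable def splitRatio (ε δ : ℝ) : ℝ := δ / (√(δ ^ 2 - ε ^ 2) + δ)

theorem sqrt_sq_sub_sq_pos {ε δ : ℝ} (hε : 0 ≤ ε) (hεδ : ε < δ) : 0 < √(δ ^ 2 - ε ^ 2) :=
  sqrt_pos.2 (by nlinarith)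

theorem splitRatio_nonneg {ε δ : ℝ} (hδ : 0 ≤ δ) : 0 ≤ splitRatio ε δ :=
  div_nonneg hδ (add_nonneg (sqrt_nonneg _) hδ)

theorem splitRatio_lt_one {ε δ : ℝ} (hε : 0 ≤ ε) (hεδ : ε < δ) : splitRatio ε δ < 1 := by
  have := sqrt_sq_sub_sq_pos hε hεδ
  rw [splitRatio, div_lt_one (by linarith)]
  linarith

/-- The lengths of the two pieces are inversely proportional to the roots `√(upperGap δ ·)` at
their Bellman points: this is the weighting under which the chord between these points stays
below the upper boundary of `Ω_δ` (`upperGap_lineMap_pos`). -/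
def IsBalancedSplit (φ : ℝ → ℝ) (δ c d t : ℝ) : Prop :=
  t ∈ Ioo c d ∧
    (t - c) * √(upperGap δ (moments φ c t)) = (d - t) * √(upperGap δ (moments φ t d))

noncomputable def splitPt (φ : ℝ → ℝ) (δ c d : ℝ) : ℝ :=
  Classical.epsilon (IsBalancedSplit φ δ c d)

namespace BMOe

variable {φ : ℝ → ℝ} {ε δ a b c d : ℝ}

theorem mono (hφ : BMOe ε a b φ) (hac : a ≤ c) (hcd : c ≤ d) (hdb : d ≤ b) :
    BMOe ε c d φ := by
  have hsub : uIcc c d ⊆ uIcc a b := by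
    rw [uIcc_of_le hcd, uIcc_of_le (hac.trans (hcd.trans hdb))]
    exact Icc_subset_Icc hac hdb
  exact ⟨hφ.1.mono_set hsub, hφ.2.1.mono_set hsub,
    fun c' d' hc' hcd' hd' => hφ.2.2 c' d' (hac.trans hc') hcd' (hd'.trans hdb)⟩

theorem root_mem_Icc (hφ : BMOe ε c d φ) (hcd : c < d) (hδ : 0 ≤ δ) :
    √(upperGap δ (moments φ c d)) ∈ Icc √(δ ^ 2 - ε ^ 2) δ := by
  have hosc : meanOsc φ c d ≤ ε ^ 2 := hφ.2.2 c d le_rfl hcd le_rfl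
  rw [upperGap_moments]
  refine ⟨sqrt_le_sqrt (by linarith), ?_⟩
  calc √(δ ^ 2 - meanOsc φ c d) ≤ √(δ ^ 2) :=
        sqrt_le_sqrt (by linarith [meanOsc_nonneg hφ.1 hφ.2.1 hcd])
    _ = δ := sqrt_sq hδ

theorem upperGap_moments_pos (hφ : BMOe ε c d φ) (hcd : c < d) (hε : 0 ≤ ε) (hεδ : ε < δ) :
    0 < upperGap δ (moments φ c d) :=
  sqrt_pos.1 ((sqrt_sq_sub_sq_pos hε hεδ).trans_le (hφ.root_mem_Icc hcd (hε.trans hεδ.le)).1)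

theorem exists_isBalancedSplit (hφ : BMOe ε c d φ) (hcd : c < d) (hε : 0 ≤ ε) (hεδ : ε < δ) :
    ∃ t, IsBalancedSplit φ δ c d t := by
  set σ := √(δ ^ 2 - ε ^ 2)
  set γ := splitRatio ε δ
  have hδ : 0 < δ := hε.trans_lt hεδ
  have hγ1 : γ < 1 := splitRatio_lt_one hε hεδ
  have hγ : 1 / 2 ≤ γ := by
    rw [show γ = δ / (σ + δ) from rfl, le_div_iff₀ (by positivity)]
    have := hφ.root_mem_Icc hcd hδ.le
    linarith [this.1.trans this.2]
  -- `(1 - γ) δ = γ σ`, so the two sides of the balance cross between `t₁` and `t₂`.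
  have hγσ : (1 - γ) * δ = γ * σ := by
    simp only [γ, splitRatio]; field_simp; ring
  set t₁ := d - γ * (d - c)
  set t₂ := c + γ * (d - c)
  have hct₁ : c < t₁ := by nlinarith
  have ht₁₂ : t₁ ≤ t₂ := by nlinarith
  have ht₂d : t₂ < d := by nlinarith
  have hsub : Icc t₁ t₂ ⊆ Ioo c d := Icc_subset_Ioo hct₁ ht₂d
  have hroots : ∀ t ∈ Ioo c d, √(upperGap δ (moments φ c t)) ∈ Icc σ δ ∧
      √(upperGap δ (moments φ t d)) ∈ Icc σ δ := fun t ht =>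
    ⟨(hφ.mono le_rfl ht.1.le ht.2.le).root_mem_Icc ht.1 hδ.le,
      (hφ.mono ht.1.le ht.2.le le_rfl).root_mem_Icc ht.2 hδ.le⟩
  set g : ℝ → ℝ := fun t =>
    (t - c) * √(upperGap δ (moments φ c t)) - (d - t) * √(upperGap δ (moments φ t d))
  have hg : ContinuousOn g (Icc t₁ t₂) := by
    have hl : ContinuousOn (fun t => √(upperGap δ (moments φ c t))) (Ioc c d) :=
      ((continuousOn_const.add ((continuousOn_avg_right hφ.1).pow 2)).sub
        (continuousOn_avg_right hφ.2.1)).sqrt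
    have hr : ContinuousOn (fun t => √(upperGap δ (moments φ t d))) (Ico c d) :=
      ((continuousOn_const.add ((continuousOn_avg_left hφ.1).pow 2)).sub
        (continuousOn_avg_left hφ.2.1)).sqrt
    exact ((continuousOn_id.sub continuousOn_const).mul
      (hl.mono (hsub.trans Ioo_subset_Ioc_self))).sub
      ((continuousOn_const.sub continuousOn_id).mul (hr.mono (hsub.trans Ioo_subset_Ico_self)))
  have hmem₁ : t₁ ∈ Ioo c d := hsub (left_mem_Icc.2 ht₁₂)
  have hmem₂ : t₂ ∈ Ioo c d := hsub (right_mem_Icc.2 ht₁₂)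
  have hg₁ : g t₁ ≤ 0 := by
    have h₁ := mul_le_mul_of_nonneg_left (hroots t₁ hmem₁).1.2 (sub_pos.2 hmem₁.1).le
    have h₂ := mul_le_mul_of_nonneg_left (hroots t₁ hmem₁).2.1 (sub_pos.2 hmem₁.2).le
    simp only [g]
    nlinarith
  have hg₂ : 0 ≤ g t₂ := by
    have h₁ := mul_le_mul_of_nonneg_left (hroots t₂ hmem₂).2.2 (sub_pos.2 hmem₂.2).le
    have h₂ := mul_le_mul_of_nonneg_left (hroots t₂ hmem₂).1.1 (sub_pos.2 hmem₂.1).le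
    simp only [g]
    nlinarith
  obtain ⟨t, ht, hgt⟩ := intermediate_value_Icc ht₁₂ hg ⟨hg₁, hg₂⟩
  exact ⟨t, hsub ht, sub_eq_zero.1 hgt⟩

theorem isBalancedSplit_splitPt (hφ : BMOe ε c d φ) (hcd : c < d) (hε : 0 ≤ ε) (hεδ : ε < δ) :
    IsBalancedSplit φ δ c d (splitPt φ δ c d) :=
  Classical.epsilon_spec (hφ.exists_isBalancedSplit hcd hε hεδ)

end BMOe

namespace IsBalancedSplit

variable {φ : ℝ → ℝ} {ε δ c d t : ℝ}

theorem sub_le_splitRatio_mul (h : IsBalancedSplit φ δ c d t) (hφ : BMOe ε c d φ)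
    (hε : 0 ≤ ε) (hεδ : ε < δ) :
    t - c ≤ splitRatio ε δ * (d - c) ∧ d - t ≤ splitRatio ε δ * (d - c) := by
  obtain ⟨⟨hct, htd⟩, hbal⟩ := h
  have hδ : 0 ≤ δ := hε.trans hεδ.le
  have hσ := sqrt_sq_sub_sq_pos hε hεδ
  have hl := (hφ.mono le_rfl hct.le htd.le).root_mem_Icc hct hδ
  have hr := (hφ.mono hct.le htd.le le_rfl).root_mem_Icc htd hδ
  have h₁ := mul_le_mul_of_nonneg_left hl.1 (sub_pos.2 hct).le
  have h₂ := mul_le_mul_of_nonneg_left hl.2 (sub_pos.2 hct).le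
  have h₃ := mul_le_mul_of_nonneg_left hr.1 (sub_pos.2 htd).le
  have h₄ := mul_le_mul_of_nonneg_left hr.2 (sub_pos.2 htd).le
  simp only [splitRatio, div_mul_eq_mul_div,
    le_div_iff₀ (show 0 < √(δ ^ 2 - ε ^ 2) + δ by positivity)]
  constructor <;> nlinarith

theorem Bm_le (h : IsBalancedSplit φ δ c d t) (hφ : BMOe ε c d φ) (hε : 0 ≤ ε) (hεδ : ε < δ) :
    (d - c) * Bm δ (moments φ c d) ≤
      (t - c) * Bm δ (moments φ c t) + (d - t) * Bm δ (moments φ t d) := by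
  obtain ⟨⟨hct, htd⟩, hbal⟩ := h
  have hcd := hct.trans htd
  have hdc : 0 < d - c := sub_pos.2 hcd
  set θ := (d - t) / (d - c) with hθdef
  have h1θ : 1 - θ = (t - c) / (d - c) := by rw [hθdef]; field_simp; ring
  have hθ : θ ∈ Icc (0 : ℝ) 1 :=
    ⟨div_nonneg (sub_pos.2 htd).le hdc.le, (div_le_one hdc).2 (by linarith)⟩
  have hmom := moments_eq_lineMap hφ.1 hφ.2.1 ⟨hct.le, htd.le⟩ hcd
  have hB := Bm_lineMap_le (by linarith) hθ
    ((hφ.mono le_rfl hct.le htd.le).upperGap_moments_pos hct hε hεδ)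
    ((hφ.mono hct.le htd.le le_rfl).upperGap_moments_pos htd hε hεδ)
    (by rw [h1θ, div_mul_eq_mul_div, div_mul_eq_mul_div, hbal])
    (hmom ▸ hφ.upperGap_moments_pos hcd hε hεδ)
  rw [hmom]
  calc (d - c) * Bm δ (AffineMap.lineMap (moments φ c t) (moments φ t d) θ)
      ≤ (d - c) * ((1 - θ) * Bm δ (moments φ c t) + θ * Bm δ (moments φ t d)) :=
        mul_le_mul_of_nonneg_left hB hdc.le
    _ = (t - c) * Bm δ (moments φ c t) + (d - t) * Bm δ (moments φ t d) := by
        rw [h1θ, hθdef]; field_simp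

end IsBalancedSplit

open Classical in
noncomputable def badSet (φ : ℝ → ℝ) (δ η : ℝ) : ℕ → ℝ → ℝ → Set ℝ
  | 0, c, d => if meanOsc φ c d ≤ η then ∅ else Ioc c d
  | n + 1, c, d => badSet φ δ η n c (splitPt φ δ c d) ∪ badSet φ δ η n (splitPt φ δ c d) d

theorem measurableSet_badSet (φ : ℝ → ℝ) (δ η : ℝ) :
    ∀ n c d, MeasurableSet (badSet φ δ η n c d)
  | 0, c, d => by
    rw [badSet]
    split_ifs
    exacts [.empty, measurableSet_Ioc]
  | n + 1, _, _ => (measurableSet_badSet φ δ η n _ _).union (measurableSet_badSet φ δ η n _ _)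

section SplittingTree

variable {φ : ℝ → ℝ} {ε δ η : ℝ}

theorem badSet_subset (hε : 0 ≤ ε) (hεδ : ε < δ) :
    ∀ n {c d}, BMOe ε c d φ → c < d → badSet φ δ η n c d ⊆ Ioc c d
  | 0, c, d, _, _ => by
    rw [badSet]
    split_ifs
    exacts [empty_subset _, subset_rfl]
  | n + 1, c, d, hφ, hcd => by
    obtain ⟨hct, htd⟩ := (hφ.isBalancedSplit_splitPt hcd hε hεδ).1
    exact union_subset
      ((badSet_subset hε hεδ n (hφ.mono le_rfl hct.le htd.le) hct).trans
        (Ioc_subset_Ioc le_rfl htd.le))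
      ((badSet_subset hε hεδ n (hφ.mono hct.le htd.le le_rfl) htd).trans
        (Ioc_subset_Ioc hct.le le_rfl))

theorem sub_mul_Bm_moments_le (hε : 0 ≤ ε) (hεδ : ε < δ) :
    ∀ n {c d}, BMOe ε c d φ → c < d → IntervalIntegrable (fun x => exp (φ x)) volume c d →
      (d - c) * Bm δ (moments φ c d) ≤
        bmWeight δ √(δ ^ 2 - η) * (∫ x in c..d, exp (φ x)) +
          bmWeight δ 0 * ∫ x in badSet φ δ η n c d, exp (φ x)
  | 0, c, d, hφ, hcd, he => by
    have hδ : 0 ≤ 1 + δ := by linarith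
    have hI : 0 ≤ ∫ x in c..d, exp (φ x) :=
      intervalIntegral.integral_nonneg hcd.le fun _ _ => (exp_pos _).le
    have hleaf : ∀ s, 0 ≤ s → s ≤ √(upperGap δ (moments φ c d)) →
        (d - c) * Bm δ (moments φ c d) ≤ bmWeight δ s * ∫ x in c..d, exp (φ x) :=
      fun s hs hsx =>
      calc (d - c) * Bm δ (moments φ c d) ≤ (d - c) * (bmWeight δ s * exp (avg φ c d)) :=
            mul_le_mul_of_nonneg_left (Bm_le_bmWeight_mul_exp hδ hs hsx) (sub_pos.2 hcd).le
        _ = bmWeight δ s * ((d - c) * exp (avg φ c d)) := by ring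
        _ ≤ bmWeight δ s * ∫ x in c..d, exp (φ x) :=
            mul_le_mul_of_nonneg_left (sub_mul_exp_avg_le hφ.1 he hcd.le)
              (bmWeight_nonneg hδ hs)
    rw [badSet]
    split_ifs with hosc
    · rw [setIntegral_empty, mul_zero, add_zero]
      exact hleaf _ (sqrt_nonneg _) (sqrt_le_sqrt (by rw [upperGap_moments]; linarith))
    · rw [← intervalIntegral.integral_of_le hcd.le]
      have := mul_nonneg (bmWeight_nonneg hδ (sqrt_nonneg (δ ^ 2 - η))) hI
      linarith [hleaf 0 le_rfl (sqrt_nonneg _)]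
  | n + 1, c, d, hφ, hcd, he => by
    have hsplit := hφ.isBalancedSplit_splitPt hcd hε hεδ
    obtain ⟨hct, htd⟩ := hsplit.1
    set t := splitPt φ δ c d
    have hl := hφ.mono le_rfl hct.le htd.le
    have hr := hφ.mono hct.le htd.le le_rfl
    have hel : IntervalIntegrable (fun x => exp (φ x)) volume c t :=
      he.mono_set (uIcc_subset_uIcc_left (Icc_subset_uIcc ⟨hct.le, htd.le⟩))
    have her : IntervalIntegrable (fun x => exp (φ x)) volume t d :=
      he.mono_set (uIcc_subset_uIcc_right (Icc_subset_uIcc ⟨hct.le, htd.le⟩))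
    have hsubl := badSet_subset (η := η) hε hεδ n hl hct
    have hsubr := badSet_subset (η := η) hε hεδ n hr htd
    have hbad : ∫ x in badSet φ δ η (n + 1) c d, exp (φ x) =
        (∫ x in badSet φ δ η n c t, exp (φ x)) + ∫ x in badSet φ δ η n t d, exp (φ x) :=
      setIntegral_union ((Ioc_disjoint_Ioc_of_le le_rfl).mono hsubl hsubr)
        (measurableSet_badSet φ δ η n t d)
        (((intervalIntegrable_iff_integrableOn_Ioc_of_le hct.le).1 hel).mono_set hsubl)
        (((intervalIntegrable_iff_integrableOn_Ioc_of_le htd.le).1 her).mono_set hsubr)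
    rw [hbad, ← intervalIntegral.integral_add_adjacent_intervals hel her]
    linarith [hsplit.Bm_le hφ hε hεδ, sub_mul_Bm_moments_le hε hεδ n hl hct hel,
      sub_mul_Bm_moments_le hε hεδ n hr htd her]

theorem volume_badSet_le (hε : 0 ≤ ε) (hεδ : ε < δ) (hη : 0 < η) {ψ : ℝ → ℝ}
    (hψ : Continuous ψ) {ω : ℝ} :
    ∀ n {c d}, BMOe ε c d φ → c < d →
      (∀ x y, |x - y| ≤ splitRatio ε δ ^ n * (d - c) → |ψ x - ψ y| ≤ ω) →
      volume (badSet φ δ η n c d) ≤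
        ENNReal.ofReal ((2 * (∫ x in c..d, (φ x - ψ x) ^ 2) + 2 * (d - c) * ω ^ 2) / η)
  | 0, c, d, hφ, hcd, hω => by
    rw [badSet]
    split_ifs with hosc
    · simp
    · rw [Real.volume_Ioc]
      refine ENNReal.ofReal_le_ofReal ((le_div_iff₀ hη).2 ?_)
      have := sub_mul_meanOsc_le hφ.1 hφ.2.1 hcd.le hψ fun x hx =>
        hω x c (by rw [pow_zero, one_mul, abs_le]; constructor <;> linarith [hx.1, hx.2])
      nlinarith
  | n + 1, c, d, hφ, hcd, hω => by
    have hsplit := hφ.isBalancedSplit_splitPt hcd hε hεδ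
    obtain ⟨hct, htd⟩ := hsplit.1
    obtain ⟨hlen₁, hlen₂⟩ := hsplit.sub_le_splitRatio_mul hφ hε hεδ
    set t := splitPt φ δ c d
    have hmod : ∀ {c' d'}, d' - c' ≤ splitRatio ε δ * (d - c) →
        ∀ x y, |x - y| ≤ splitRatio ε δ ^ n * (d' - c') → |ψ x - ψ y| ≤ ω :=
      fun hlen x y hxy => hω x y (hxy.trans (by
        rw [pow_succ, mul_assoc]
        exact mul_le_mul_of_nonneg_left hlen (pow_nonneg (splitRatio_nonneg (hε.trans hεδ.le)) n)))
    have hbound : ∀ {c' d'}, c' ≤ d' →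
        0 ≤ (2 * (∫ x in c'..d', (φ x - ψ x) ^ 2) + 2 * (d' - c') * ω ^ 2) / η :=
      fun hcd' => div_nonneg (add_nonneg (mul_nonneg zero_le_two
        (intervalIntegral.integral_nonneg hcd' fun _ _ => sq_nonneg _))
        (mul_nonneg (mul_nonneg zero_le_two (sub_nonneg.2 hcd')) (sq_nonneg _))) hη.le
    have hl := hφ.mono le_rfl hct.le htd.le
    have hr := hφ.mono hct.le htd.le le_rfl
    calc volume (badSet φ δ η (n + 1) c d)
        ≤ volume (badSet φ δ η n c t) + volume (badSet φ δ η n t d) := measure_union_le _ _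
      _ ≤ _ := add_le_add (volume_badSet_le hε hεδ hη hψ n hl hct (hmod hlen₁))
          (volume_badSet_le hε hεδ hη hψ n hr htd (hmod hlen₂))
      _ = _ := by
        rw [← ENNReal.ofReal_add (hbound hct.le) (hbound htd.le), ← add_div,
          ← intervalIntegral.integral_add_adjacent_intervals (hl.1.sub_continuous_sq hl.2.1 hψ)
            (hr.1.sub_continuous_sq hr.2.1 hψ)]
        ring_nf

end SplittingTree

theorem exists_uniformContinuous_integral_sub_sq_le {φ : ℝ → ℝ} {a b r : ℝ} (hab : a ≤ b)
    (hφ : IntervalIntegrable φ volume a b)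
    (hφ2 : IntervalIntegrable (fun x => φ x ^ 2) volume a b) (hr : 0 < r) :
    ∃ ψ : ℝ → ℝ, Continuous ψ ∧ UniformContinuous ψ ∧ ∫ x in a..b, (φ x - ψ x) ^ 2 ≤ r := by
  rw [intervalIntegrable_iff_integrableOn_Ioc_of_le hab] at hφ hφ2
  have hmem : MemLp φ (ENNReal.ofReal 2) (volume.restrict (Ioc a b)) := by
    rw [ENNReal.ofReal_ofNat]
    exact (memLp_two_iff_integrable_sq hφ.aestronglyMeasurable).2 hφ2
  obtain ⟨ψ, hsupp, hint, hψ, -⟩ := hmem.exists_hasCompactSupport_integral_rpow_sub_le two_pos hr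
  refine ⟨ψ, hψ, hsupp.uniformContinuous_of_continuous hψ, ?_⟩
  rw [intervalIntegral.integral_of_le hab]
  simpa [Real.norm_eq_abs, sq_abs] using hint

section Limits

variable {φ : ℝ → ℝ} {ε δ η a b : ℝ}

theorem tendsto_volume_badSet (hφ : BMOe ε a b φ) (hab : a < b) (hε : 0 ≤ ε) (hεδ : ε < δ)
    (hη : 0 < η) : Tendsto (fun n => volume (badSet φ δ η n a b)) atTop (𝓝 0) := by
  rw [ENNReal.tendsto_nhds_zero]
  intro e he
  obtain ⟨r, -, hr, hre⟩ := ENNReal.lt_iff_exists_real_btwn.1 he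
  have hr : 0 < r := ENNReal.ofReal_pos.1 hr
  have hba : 0 < b - a := sub_pos.2 hab
  obtain ⟨ψ, hψ, hψu, hψr⟩ := exists_uniformContinuous_integral_sub_sq_le hab.le hφ.1 hφ.2.1
    (show 0 < η * r / 4 by positivity)
  set ω := √(η * r / (4 * (b - a)))
  have hω2 : ω ^ 2 = η * r / (4 * (b - a)) := sq_sqrt (by positivity)
  obtain ⟨m, hm, hψm⟩ := Metric.uniformContinuous_iff.1 hψu ω (sqrt_pos.2 (by positivity))
  set γ := splitRatio ε δ
  have hγ1 : γ < 1 := splitRatio_lt_one hε hεδ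
  obtain ⟨N, hN⟩ := exists_pow_lt_of_lt_one (show 0 < m / (b - a) by positivity) hγ1
  filter_upwards [eventually_ge_atTop N] with n hn
  have hmod : ∀ x y, |x - y| ≤ γ ^ n * (b - a) → |ψ x - ψ y| ≤ ω := fun x y hxy => by
    refine (hψm ?_).le
    calc dist x y ≤ γ ^ N * (b - a) := by
          rw [Real.dist_eq]
          exact hxy.trans (mul_le_mul_of_nonneg_right
            (pow_le_pow_of_le_one (splitRatio_nonneg (hε.trans hεδ.le)) hγ1.le hn) hba.le)
      _ < m / (b - a) * (b - a) := by gcongr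
      _ = m := div_mul_cancel₀ _ hba.ne'
  refine (volume_badSet_le hε hεδ hη hψ n hφ hab hmod).trans (le_trans ?_ hre.le)
  refine ENNReal.ofReal_le_ofReal ((div_le_iff₀ hη).2 ?_)
  rw [hω2]
  field_simp
  nlinarith

theorem tendsto_setIntegral_badSet (hφ : BMOe ε a b φ) (hab : a < b)
    (he : IntegrableOn (fun x => exp (φ x)) (Ioc a b)) (hε : 0 ≤ ε) (hεδ : ε < δ) (hη : 0 < η) :
    Tendsto (fun n => ∫ x in badSet φ δ η n a b, exp (φ x)) atTop (𝓝 0) := by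
  have hsub := fun n => badSet_subset (η := η) hε hεδ n hφ hab
  refine (he.tendsto_setIntegral_nhds_zero (s := fun n => badSet φ δ η n a b)
    ((tendsto_volume_badSet hφ hab hε hεδ hη).congr fun n => ?_)).congr fun n => ?_
  · rw [Function.comp_apply, Measure.restrict_apply (measurableSet_badSet φ δ η n a b),
      inter_eq_left.2 (hsub n)]
  · rw [Measure.restrict_restrict_of_subset (hsub n)]

theorem BMOe.sub_mul_Bm_moments_le_integral_exp_of_lt (hφ : BMOe ε a b φ) (hab : a < b)
    (he : IntegrableOn (fun x => exp (φ x)) (Ioc a b)) (hε : 0 ≤ ε) (hεδ : ε < δ) :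
    (b - a) * Bm δ (moments φ a b) ≤ ∫ x in a..b, exp (φ x) := by
  have heab : IntervalIntegrable (fun x => exp (φ x)) volume a b :=
    (intervalIntegrable_iff_integrableOn_Ioc_of_le hab.le).2 he
  have hη : ∀ η > 0, (b - a) * Bm δ (moments φ a b) ≤
      bmWeight δ √(δ ^ 2 - η) * ∫ x in a..b, exp (φ x) := fun η hη => by
    have hlim := tendsto_const_nhds (x := bmWeight δ √(δ ^ 2 - η) * ∫ x in a..b, exp (φ x)).add
      ((tendsto_setIntegral_badSet hφ hab he hε hεδ hη).const_mul (bmWeight δ 0))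
    rw [mul_zero, add_zero] at hlim
    exact ge_of_tendsto' hlim fun n => sub_mul_Bm_moments_le hε hεδ n hφ hab heab
  have hcont : ContinuousAt (fun η => bmWeight δ √(δ ^ 2 - η) * ∫ x in a..b, exp (φ x)) 0 := by
    unfold bmWeight
    fun_prop
  have := ge_of_tendsto (hcont.tendsto.mono_left nhdsWithin_le_nhds)
    (eventually_nhdsWithin_of_forall (s := Ioi 0) hη)
  rwa [sub_zero, bmWeight_sqrt_sq (hε.trans hεδ.le), one_mul] at this

theorem BMOe.sub_mul_Bm_moments_le_integral_exp (hφ : BMOe ε a b φ) (hab : a < b)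
    (he : IntegrableOn (fun x => exp (φ x)) (Ioc a b)) (hε : 0 ≤ ε) :
    (b - a) * Bm ε (moments φ a b) ≤ ∫ x in a..b, exp (φ x) := by
  have hcont : ContinuousAt (fun δ => (b - a) * Bm δ (moments φ a b)) ε := by
    simp only [Bm]
    fun_prop (disch := positivity)
  exact le_of_tendsto (hcont.tendsto.mono_left nhdsWithin_le_nhds)
    (eventually_nhdsWithin_of_forall (s := Ioi ε) fun δ hδ =>
      hφ.sub_mul_Bm_moments_le_integral_exp_of_lt hab he hε hδ)

end Limits

/-- Lower Bellman estimate in the continuous case: for `φ ∈ BMO_ε(I)` with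
`ε > 0`, the average of `e^φ` (as a lower Lebesgue integral divided by `|I|`,
possibly `+∞`) is at least `B⁻_ε(⟨φ⟩_I, ⟨φ²⟩_I)`. -/
theorem stmt9 (ε : ℝ) (hε : 0 < ε) (a b : ℝ) (hab : a < b)
    (φ : ℝ → ℝ) (hφ : BMOe ε a b φ) :
    ENNReal.ofReal (Bm ε (avg φ a b, avg (fun t => (φ t) ^ 2) a b)) ≤
      (∫⁻ t in Set.Ioc a b, ENNReal.ofReal (Real.exp (φ t))) / ENNReal.ofReal (b - a) := by
  by_cases hfin : ∫⁻ t in Ioc a b, ENNReal.ofReal (exp (φ t)) = ⊤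
  · rw [hfin, ENNReal.top_div_of_ne_top ENNReal.ofReal_ne_top]
    exact le_top
  have hpos : 0 ≤ᵐ[volume.restrict (Ioc a b)] fun t => exp (φ t) :=
    ae_of_all _ fun _ => (exp_pos _).le
  have he : IntegrableOn (fun t => exp (φ t)) (Ioc a b) :=
    ⟨continuous_exp.comp_aestronglyMeasurable hφ.1.1.aestronglyMeasurable,
      (hasFiniteIntegral_iff_ofReal hpos).2 (lt_top_iff_ne_top.2 hfin)⟩
  rw [← ofReal_integral_eq_lintegral_ofReal he hpos, ← intervalIntegral.integral_of_le hab.le,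
    ← ENNReal.ofReal_div_of_pos (sub_pos.2 hab)]
  refine ENNReal.ofReal_le_ofReal ((le_div_iff₀ (sub_pos.2 hab)).2 ?_)
  rw [mul_comm]
  exact hφ.sub_mul_Bm_moments_le_integral_exp hab he hε.le
end
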